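/- Let X be the bi-infinite i.i.d. burger word and suppose all orders are stale (p_F = 0, p_S = 1). Let ι₀ be the smallest i ≥ 0 with Xᵢ = H, and inductively let ιₖ be the smallest i ≥ ιₖ₋₁ + 1 with Xᵢ ∈ {E, C} if k is odd and Xᵢ ∈ {E, H} if k is even. Then for each k ∈ ℕ, the law of ιₖ − ιₖ₋₁ is geometric with success probability (1 − p + q)/4, where p = p_D and q = p_E. -/

import Mathlib

open scoped ENNReal NNReal

inductive BSym : Type
  | hb | cb | ho | co | db | eb | fo | so
deriving DecidableEq

instance : MeasurableSpace BSym := ⊤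

abbrev Word := List BSym

def isBurger : BSym → Bool
  | BSym.hb => true | BSym.cb => true | BSym.db => true | BSym.eb => true
  | _ => false

def isHC : BSym → Bool
  | BSym.hb => true | BSym.cb => true | _ => false

def rules : List (Word × Word) :=
  [([BSym.cb, BSym.co], []), ([BSym.hb, BSym.ho], []),
   ([BSym.cb, BSym.ho], [BSym.ho, BSym.cb]), ([BSym.hb, BSym.co], [BSym.co, BSym.hb]),
   ([BSym.hb, BSym.fo], []), ([BSym.cb, BSym.fo], []),
   ([BSym.hb, BSym.so], [BSym.hb, BSym.co]), ([BSym.cb, BSym.so], [BSym.cb, BSym.ho]),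
   ([BSym.hb, BSym.db], [BSym.hb, BSym.hb]), ([BSym.cb, BSym.db], [BSym.cb, BSym.cb]),
   ([BSym.hb, BSym.eb], [BSym.hb, BSym.cb]), ([BSym.cb, BSym.eb], [BSym.cb, BSym.hb])]

inductive Step : Word → Word → Prop
  | mk (u v l r : Word) (hlr : (l, r) ∈ rules) : Step (u ++ l ++ v) (u ++ r ++ v)

def WEquiv : Word → Word → Prop := Relation.EqvGen Step

def Reduced (x : Word) : Prop :=
  ∃ u v : Word, x = u ++ v ∧ (∀ a ∈ u, isHC a = false) ∧ ∀ a ∈ v, isHC a = true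

def NB (x : Word) : ℕ := (x.filter isBurger).length
def NO (x : Word) : ℕ := (x.filter (fun a => !isBurger a)).length
def netC (x : Word) : ℤ := (NB x : ℤ) - (NO x : ℤ)
def NHC (x : Word) : ℕ := (x.filter isHC).length
def NDS (x : Word) : ℕ := x.count BSym.db + x.count BSym.so
def discrep (x : Word) : ℤ :=
  ((x.count BSym.hb : ℤ) - (x.count BSym.ho : ℤ)) - ((x.count BSym.cb : ℤ) - (x.count BSym.co : ℤ))

def wnd {Ω : Type*} (X : ℤ → Ω → BSym) (ω : Ω) (a b : ℤ) : Word :=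
  (List.range (b + 1 - a).toNat).map fun i => X (a + i) ω

def fwd {Ω : Type*} (X : ℕ → Ω → BSym) (ω : Ω) (n : ℕ) : Word :=
  (List.range n).map fun i => X (i + 1) ω
open MeasureTheory ProbabilityTheory Filter

def lawPQ {Ω : Type*} [MeasurableSpace Ω] (p q : ℝ) (μ : Measure Ω) (Y : Ω → BSym) : Prop :=
  μ (Y ⁻¹' {BSym.ho}) = ENNReal.ofReal ((1 - p) / 4) ∧
  μ (Y ⁻¹' {BSym.co}) = ENNReal.ofReal ((1 - p) / 4) ∧
  μ (Y ⁻¹' {BSym.so}) = ENNReal.ofReal (p / 2) ∧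
  μ (Y ⁻¹' {BSym.hb}) = ENNReal.ofReal ((1 - q) / 4) ∧
  μ (Y ⁻¹' {BSym.cb}) = ENNReal.ofReal ((1 - q) / 4) ∧
  μ (Y ⁻¹' {BSym.db}) = ENNReal.ofReal (q / 2) ∧
  μ (Y ⁻¹' {BSym.fo}) = 0 ∧ μ (Y ⁻¹' {BSym.eb}) = 0
/-- The law of a single symbol in the all-stale-orders burger model: `P(so) = 1/2`,
`P(db) = p/2`, `P(eb) = q/2`, `P(hb) = P(cb) = (1-p-q)/4`, and no `ho`, `co` or `fo`. -/
def lawStale {Ω : Type*} [MeasurableSpace Ω] (p q : ℝ) (μ : Measure Ω) (Y : Ω → BSym) : Prop :=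
  μ (Y ⁻¹' {BSym.so}) = ENNReal.ofReal (1 / 2) ∧
  μ (Y ⁻¹' {BSym.ho}) = 0 ∧ μ (Y ⁻¹' {BSym.co}) = 0 ∧ μ (Y ⁻¹' {BSym.fo}) = 0 ∧
  μ (Y ⁻¹' {BSym.db}) = ENNReal.ofReal (p / 2) ∧
  μ (Y ⁻¹' {BSym.eb}) = ENNReal.ofReal (q / 2) ∧
  μ (Y ⁻¹' {BSym.hb}) = ENNReal.ofReal ((1 - p - q) / 4) ∧
  μ (Y ⁻¹' {BSym.cb}) = ENNReal.ofReal ((1 - p - q) / 4)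

/-- The alternation times of the all-stale-orders model: `ι 0` is the smallest `i ≥ 0` with
`X i = hb`; for `k ≥ 1`, `ι k` is the smallest `i ≥ ι (k-1) + 1` with `X i ∈ {eb, cb}` if `k`
is odd, and `X i ∈ {eb, hb}` if `k` is even. -/
noncomputable def iota {Ω : Type*} (X : ℤ → Ω → BSym) (ω : Ω) : ℕ → ℕ
  | 0 => sInf {i : ℕ | X (i : ℤ) ω = BSym.hb}
  | k + 1 => sInf {i : ℕ | iota X ω k < i ∧
      (if (k + 1) % 2 = 1 then X (i : ℤ) ω = BSym.eb ∨ X (i : ℤ) ω = BSym.cb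
       else X (i : ℤ) ω = BSym.eb ∨ X (i : ℤ) ω = BSym.hb)}
/-! ### Auxiliary development for the geometric law of the alternation increments -/

section IotaAux

open MeasureTheory ProbabilityTheory Set

/-- The success set used in the definition of `iota (k+1)`. -/
def Csucc (k : ℕ) : Set BSym :=
  {a | if (k + 1) % 2 = 1 then a = BSym.eb ∨ a = BSym.cb else a = BSym.eb ∨ a = BSym.hb}

variable {Ω : Type*}

/-- The event `{iota · k = n}`, described purely in terms of the coordinates `0, …, n`
(valid on the almost sure event that all the relevant minima exist). -/
def Aev (X : ℤ → Ω → BSym) : ℕ → ℕ → Set Ω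
  | 0, n => {ω | (∀ i : ℤ, 0 ≤ i → i < (n : ℤ) → X i ω ≠ BSym.hb) ∧ X (n : ℤ) ω = BSym.hb}
  | k + 1, n => {ω | ∃ j, j < n ∧ ω ∈ Aev X k j ∧
      (∀ i : ℤ, (j : ℤ) < i → i < (n : ℤ) → X i ω ∉ Csucc k) ∧ X (n : ℤ) ω ∈ Csucc k}

/-- The event that, after time `n`, the first success (for the `k+1`-st alternation) occurs
exactly at time `n + m`. -/
def Bev (X : ℤ → Ω → BSym) (k n m : ℕ) : Set Ω :=
  {ω | (∀ i : ℤ, (n : ℤ) < i → i < (n : ℤ) + m → X i ω ∉ Csucc k) ∧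
    X ((n : ℤ) + m) ω ∈ Csucc k}

lemma iota_succ_eq (X : ℤ → Ω → BSym) (ω : Ω) (k : ℕ) :
    iota X ω (k + 1) = sInf {i : ℕ | iota X ω k < i ∧ X (i : ℤ) ω ∈ Csucc k} := rfl

lemma iota_eq_of_mem_Aev (X : ℤ → Ω → BSym) (ω : Ω) :
    ∀ k n, ω ∈ Aev X k n → iota X ω k = n := by
  intro k
  induction k with
  | zero =>
    intro n h
    obtain ⟨h1, h2⟩ := h
    show sInf {i : ℕ | X (i : ℤ) ω = BSym.hb} = n
    refine IsLeast.csInf_eq ⟨h2, ?_⟩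
    intro i hi
    by_contra hlt
    push_neg at hlt
    exact h1 (i : ℤ) (Int.natCast_nonneg i) (by exact_mod_cast hlt) hi
  | succ k ih =>
    intro n h
    obtain ⟨j, hjn, hAj, hmid, hn⟩ := h
    rw [iota_succ_eq, ih j hAj]
    refine IsLeast.csInf_eq ⟨⟨hjn, hn⟩, ?_⟩
    rintro i ⟨hji, hiC⟩
    by_contra hlt
    push_neg at hlt
    exact hmid (i : ℤ) (by exact_mod_cast hji) (by exact_mod_cast hlt) hiC

lemma Aev_eq_iff {X : ℤ → Ω → BSym} {ω : Ω} {k n n' : ℕ}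
    (h : ω ∈ Aev X k n) (h' : ω ∈ Aev X k n') : n = n' :=
  (iota_eq_of_mem_Aev X ω k n h).symm.trans (iota_eq_of_mem_Aev X ω k n' h')

/-- A good event on which every `iota` is an honest minimum. -/
def Gset (X : ℤ → Ω → BSym) : Set Ω :=
  {ω | ∀ n : ℕ, (∃ i : ℕ, n < i ∧ X (i : ℤ) ω = BSym.hb) ∧
    (∃ i : ℕ, n < i ∧ X (i : ℤ) ω = BSym.cb)}

lemma cb_or_hb_mem_Csucc (k : ℕ) : BSym.cb ∈ Csucc k ∨ BSym.hb ∈ Csucc k := by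
  by_cases h : (k + 1) % 2 = 1
  · left; simp [Csucc, h]
  · right; simp [Csucc, h]

lemma exists_mem_Aev {X : ℤ → Ω → BSym} {ω : Ω} (hω : ω ∈ Gset X) :
    ∀ k : ℕ, ∃ n, ω ∈ Aev X k n := by
  intro k
  induction k with
  | zero =>
    obtain ⟨i, _, hi⟩ := (hω 0).1
    have hne : {i : ℕ | X (i : ℤ) ω = BSym.hb}.Nonempty := ⟨i, hi⟩
    refine ⟨sInf {i : ℕ | X (i : ℤ) ω = BSym.hb}, ?_, Nat.sInf_mem hne⟩
    intro i' h0 hlt hhb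
    have hmem : i'.toNat ∈ {i : ℕ | X (i : ℤ) ω = BSym.hb} := by
      show X ((i'.toNat : ℕ) : ℤ) ω = BSym.hb
      rwa [Int.toNat_of_nonneg h0]
    have := Nat.sInf_le hmem
    omega
  | succ k ih =>
    obtain ⟨j, hAj⟩ := ih
    have hne : {i : ℕ | j < i ∧ X (i : ℤ) ω ∈ Csucc k}.Nonempty := by
      rcases cb_or_hb_mem_Csucc k with hc | hc
      · obtain ⟨i, hji, hcb⟩ := (hω j).2
        exact ⟨i, hji, by rw [hcb]; exact hc⟩
      · obtain ⟨i, hji, hhb⟩ := (hω j).1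
        exact ⟨i, hji, by rw [hhb]; exact hc⟩
    set n := sInf {i : ℕ | j < i ∧ X (i : ℤ) ω ∈ Csucc k} with hn
    have hmemn := Nat.sInf_mem hne
    refine ⟨n, j, hmemn.1, hAj, ?_, hmemn.2⟩
    intro i hji hin hiC
    have h0 : (0 : ℤ) ≤ i := le_trans (Int.natCast_nonneg j) hji.le
    have hmem : i.toNat ∈ {i : ℕ | j < i ∧ X (i : ℤ) ω ∈ Csucc k} := by
      constructor
      · omega
      · show X ((i.toNat : ℕ) : ℤ) ω ∈ Csucc k
        rwa [Int.toNat_of_nonneg h0]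
    have := Nat.sInf_le hmem
    omega

end IotaAux
section MeasAux

open MeasureTheory ProbabilityTheory Set

variable {Ω : Type*} [MeasurableSpace Ω]

/-- σ-algebra generated by the coordinates up to time `t`. -/
def Fle (X : ℤ → Ω → BSym) (t : ℤ) : MeasurableSpace Ω :=
  ⨆ i ∈ Set.Iic t, MeasurableSpace.comap (X i) ⊤

/-- σ-algebra generated by the coordinates after time `t`. -/
def Fgt (X : ℤ → Ω → BSym) (t : ℤ) : MeasurableSpace Ω :=
  ⨆ i ∈ Set.Ioi t, MeasurableSpace.comap (X i) ⊤

lemma measurableSet_coord {X : ℤ → Ω → BSym} {t : Set ℤ} {i : ℤ} (hi : i ∈ t) (D : Set BSym) :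
    MeasurableSet[⨆ j ∈ t, MeasurableSpace.comap (X j) ⊤] (X i ⁻¹' D) :=
  (le_biSup (fun j => MeasurableSpace.comap (X j) ⊤) hi) (X i ⁻¹' D) ⟨D, trivial, rfl⟩

lemma Fle_mono (X : ℤ → Ω → BSym) {s t : ℤ} (h : s ≤ t) : Fle X s ≤ Fle X t :=
  biSup_mono fun _ hi => le_trans hi h

lemma Fle_le (X : ℤ → Ω → BSym) (hmeas : ∀ i, Measurable (X i)) (t : ℤ) :
    Fle X t ≤ (inferInstance : MeasurableSpace Ω) :=
  iSup₂_le fun i _ => (hmeas i).comap_le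

lemma Fgt_le (X : ℤ → Ω → BSym) (hmeas : ∀ i, Measurable (X i)) (t : ℤ) :
    Fgt X t ≤ (inferInstance : MeasurableSpace Ω) :=
  iSup₂_le fun i _ => (hmeas i).comap_le

lemma measurableSet_Aev (X : ℤ → Ω → BSym) :
    ∀ (k : ℕ) (n : ℕ), MeasurableSet[Fle X (n : ℤ)] (Aev X k n) := by
  intro k
  induction k with
  | zero =>
    intro n
    have : Aev X 0 n =
        (⋂ i : ℤ, ⋂ (_ : 0 ≤ i), ⋂ (_ : i < (n : ℤ)), X i ⁻¹' {BSym.hb}ᶜ) ∩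
          X (n : ℤ) ⁻¹' {BSym.hb} := by
      ext ω
      simp [Aev, Set.mem_iInter]
    rw [this]
    refine MeasurableSet.inter ?_ (measurableSet_coord (Set.mem_Iic.mpr le_rfl) _)
    refine MeasurableSet.iInter fun i => MeasurableSet.iInter fun h0 =>
      MeasurableSet.iInter fun hlt => measurableSet_coord (Set.mem_Iic.mpr hlt.le) _
  | succ k ih =>
    intro n
    have : Aev X (k + 1) n =
        ⋃ j : ℕ, ⋃ (_ : j < n), (Aev X k j ∩
          ((⋂ i : ℤ, ⋂ (_ : (j : ℤ) < i), ⋂ (_ : i < (n : ℤ)), X i ⁻¹' (Csucc k)ᶜ) ∩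
            X (n : ℤ) ⁻¹' (Csucc k))) := by
      ext ω
      simp [Aev, Set.mem_iInter, Set.mem_iUnion]
      tauto
    rw [this]
    refine MeasurableSet.iUnion fun j => MeasurableSet.iUnion fun hj => ?_
    refine MeasurableSet.inter (Fle_mono X (by exact_mod_cast hj.le) _ (ih j)) ?_
    refine MeasurableSet.inter ?_ (measurableSet_coord (Set.mem_Iic.mpr le_rfl) _)
    exact MeasurableSet.iInter fun i => MeasurableSet.iInter fun h1 =>
      MeasurableSet.iInter fun h2 => measurableSet_coord (Set.mem_Iic.mpr h2.le) _

lemma measurableSet_Bev_gt (X : ℤ → Ω → BSym) (k n m : ℕ) (hm : 1 ≤ m) :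
    MeasurableSet[Fgt X (n : ℤ)] (Bev X k n m) := by
  have : Bev X k n m =
      (⋂ i : ℤ, ⋂ (_ : (n : ℤ) < i), ⋂ (_ : i < (n : ℤ) + m), X i ⁻¹' (Csucc k)ᶜ) ∩
        X ((n : ℤ) + m) ⁻¹' (Csucc k) := by
    ext ω
    simp [Bev, Set.mem_iInter]
  rw [this]
  refine MeasurableSet.inter ?_ (measurableSet_coord (by simp only [Set.mem_Ioi]; push_cast; omega) _)
  exact MeasurableSet.iInter fun i => MeasurableSet.iInter fun h1 =>
    MeasurableSet.iInter fun h2 => measurableSet_coord (Set.mem_Ioi.mpr h1) _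

lemma measurableSet_Bev_mid (X : ℤ → Ω → BSym) (k n m : ℕ) (hm : 1 ≤ m) :
    MeasurableSet[Fle X ((n : ℤ) + m - 1)]
      {ω | ∀ i : ℤ, (n : ℤ) < i → i < (n : ℤ) + m → X i ω ∉ Csucc k} := by
  have : {ω | ∀ i : ℤ, (n : ℤ) < i → i < (n : ℤ) + m → X i ω ∉ Csucc k} =
      ⋂ i : ℤ, ⋂ (_ : (n : ℤ) < i), ⋂ (_ : i < (n : ℤ) + m), X i ⁻¹' (Csucc k)ᶜ := by
    ext ω
    simp [Set.mem_iInter]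
  rw [this]
  exact MeasurableSet.iInter fun i => MeasurableSet.iInter fun h1 =>
    MeasurableSet.iInter fun h2 => measurableSet_coord (show i ∈ Set.Iic ((n:ℤ)+m-1) by simp only [Set.mem_Iic]; omega) _

end MeasAux
section MeasAux2

open MeasureTheory ProbabilityTheory Set Filter

variable {Ω : Type*} [MeasurableSpace Ω] {μ : Measure Ω} {X : ℤ → Ω → BSym} {p q : ℝ}

lemma measPre (hmeas : ∀ i, Measurable (X i)) (i : ℤ) (D : Set BSym) :
    MeasurableSet (X i ⁻¹' D) :=
  (hmeas i) MeasurableSpace.measurableSet_top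

lemma meas_Csucc (hq0 : 0 ≤ q) (hpq : p + q < 1)
    (hmeas : ∀ i, Measurable (X i)) (hlaw : ∀ i, lawStale p q μ (X i)) (i : ℤ) (k : ℕ) :
    μ (X i ⁻¹' Csucc k) = ENNReal.ofReal ((1 - p + q) / 4) := by
  obtain ⟨-, -, -, -, -, heb, hhb, hcb⟩ := hlaw i
  have harith : q / 2 + (1 - p - q) / 4 = (1 - p + q) / 4 := by ring
  by_cases h : (k + 1) % 2 = 1
  · have hCk : Csucc k = {BSym.eb} ∪ {BSym.cb} := by
      ext a; simp [Csucc, h]; tauto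
    rw [hCk, Set.preimage_union,
      measure_union (Disjoint.preimage _ (by simp)) (measPre hmeas i _),
      heb, hcb, ← ENNReal.ofReal_add (by linarith) (by linarith), harith]
  · have hCk : Csucc k = {BSym.eb} ∪ {BSym.hb} := by
      ext a; simp [Csucc, h]; tauto
    rw [hCk, Set.preimage_union,
      measure_union (Disjoint.preimage _ (by simp)) (measPre hmeas i _),
      heb, hhb, ← ENNReal.ofReal_add (by linarith) (by linarith), harith]

lemma meas_Csucc_compl [IsProbabilityMeasure μ] (hq0 : 0 ≤ q) (hpq : p + q < 1)
    (hmeas : ∀ i, Measurable (X i)) (hlaw : ∀ i, lawStale p q μ (X i)) (i : ℤ) (k : ℕ) :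
    μ (X i ⁻¹' (Csucc k)ᶜ) = ENNReal.ofReal (1 - (1 - p + q) / 4) := by
  have hs0 : 0 ≤ (1 - p + q) / 4 := div_nonneg (by linarith) (by norm_num)
  rw [Set.preimage_compl, measure_compl (measPre hmeas i _) (measure_ne_top μ _),
    measure_univ, meas_Csucc hq0 hpq hmeas hlaw i k, ENNReal.ofReal_sub 1 hs0,
    ENNReal.ofReal_one]

lemma meas_single_compl [IsProbabilityMeasure μ] {a : BSym} {r : ℝ} (hr0 : 0 ≤ r)
    (hmeas : ∀ i, Measurable (X i)) (ha : ∀ i : ℤ, μ (X i ⁻¹' {a}) = ENNReal.ofReal r)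
    (i : ℤ) : μ (X i ⁻¹' {a}ᶜ) = ENNReal.ofReal (1 - r) := by
  rw [Set.preimage_compl, measure_compl (measPre hmeas i _) (measure_ne_top μ _),
    measure_univ, ha i, ENNReal.ofReal_sub 1 hr0, ENNReal.ofReal_one]

lemma null_tail [IsProbabilityMeasure μ]
    (hmeas : ∀ i, Measurable (X i))
    (hiid : iIndepFun X μ)
    {a : BSym} {r : ℝ} (hr0 : 0 < r) (hr1 : r ≤ 1)
    (ha : ∀ i : ℤ, μ (X i ⁻¹' {a}) = ENNReal.ofReal r) (n : ℕ) :
    μ {ω | ∀ i : ℕ, n < i → X (i : ℤ) ω ≠ a} = 0 := by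
  set c : ℝ≥0∞ := ENNReal.ofReal (1 - r) with hc
  have hclt : c < 1 := ENNReal.ofReal_lt_one.mpr (by linarith)
  have hle : ∀ N : ℕ, μ {ω | ∀ i : ℕ, n < i → X (i : ℤ) ω ≠ a} ≤ c ^ N := by
    intro N
    have hsub : {ω | ∀ i : ℕ, n < i → X (i : ℤ) ω ≠ a} ⊆
        ⋂ i ∈ Finset.Ioc (n : ℤ) ((n : ℤ) + N), X i ⁻¹' {a}ᶜ := by
      intro ω hω
      simp only [Set.mem_iInter, Finset.mem_Ioc]
      rintro i ⟨h1, h2⟩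
      have h0 : (0 : ℤ) ≤ i := le_trans (Int.natCast_nonneg n) h1.le
      have hne : X ((i.toNat : ℕ) : ℤ) ω ≠ a := hω i.toNat (by omega)
      rw [Int.toNat_of_nonneg h0] at hne
      exact hne
    calc μ {ω | ∀ i : ℕ, n < i → X (i : ℤ) ω ≠ a}
        ≤ μ (⋂ i ∈ Finset.Ioc (n : ℤ) ((n : ℤ) + N), X i ⁻¹' {a}ᶜ) := measure_mono hsub
      _ = ∏ i ∈ Finset.Ioc (n : ℤ) ((n : ℤ) + N), μ (X i ⁻¹' {a}ᶜ) :=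
          hiid.meas_biInter (fun i _ => ⟨{a}ᶜ, trivial, rfl⟩)
      _ = c ^ N := by
          rw [Finset.prod_congr rfl fun i _ => meas_single_compl hr0.le hmeas ha i,
            Finset.prod_const, Int.card_Ioc]
          congr 1
          omega
  refine le_antisymm ?_ (zero_le)
  exact ge_of_tendsto' (ENNReal.tendsto_pow_atTop_nhds_zero_of_lt_one hclt) hle

lemma Gc_null [IsProbabilityMeasure μ] (hp0 : 0 ≤ p) (hq0 : 0 ≤ q) (hpq : p + q < 1)
    (hmeas : ∀ i, Measurable (X i))
    (hiid : iIndepFun X μ)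
    (hlaw : ∀ i, lawStale p q μ (X i)) :
    μ (Gset X)ᶜ = 0 := by
  have hr0 : 0 < (1 - p - q) / 4 := by linarith
  have hr1 : (1 - p - q) / 4 ≤ 1 := by linarith
  have hhb : ∀ i : ℤ, μ (X i ⁻¹' {BSym.hb}) = ENNReal.ofReal ((1 - p - q) / 4) :=
    fun i => (hlaw i).2.2.2.2.2.2.1
  have hcb : ∀ i : ℤ, μ (X i ⁻¹' {BSym.cb}) = ENNReal.ofReal ((1 - p - q) / 4) :=
    fun i => (hlaw i).2.2.2.2.2.2.2
  have hsub : (Gset X)ᶜ ⊆ ⋃ n : ℕ, ({ω | ∀ i : ℕ, n < i → X (i : ℤ) ω ≠ BSym.hb} ∪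
      {ω | ∀ i : ℕ, n < i → X (i : ℤ) ω ≠ BSym.cb}) := by
    intro ω hω
    simp only [Gset, Set.mem_compl_iff, Set.mem_setOf_eq, not_forall] at hω
    obtain ⟨n, hn⟩ := hω
    rw [not_and_or] at hn
    refine Set.mem_iUnion.mpr ⟨n, ?_⟩
    rcases hn with h | h
    · exact Or.inl fun i hi hXa => h ⟨i, hi, hXa⟩
    · exact Or.inr fun i hi hXa => h ⟨i, hi, hXa⟩
  refine measure_mono_null hsub (measure_iUnion_null fun n => measure_union_null ?_ ?_)
  · exact null_tail hmeas hiid hr0 hr1 hhb n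
  · exact null_tail hmeas hiid hr0 hr1 hcb n

lemma indep_split (hmeas : ∀ i, Measurable (X i))
    (hiid : iIndepFun X μ) (t : ℤ) :
    Indep (Fle X t) (Fgt X t) μ :=
  indep_iSup_of_disjoint (fun i => (hmeas i).comap_le)
    ((iIndepFun_iff_iIndep _ _ _).mp hiid) (Set.Iic_disjoint_Ioi le_rfl)

lemma meas_Bev [IsProbabilityMeasure μ] (hq0 : 0 ≤ q) (hpq : p + q < 1)
    (hmeas : ∀ i, Measurable (X i))
    (hiid : iIndepFun X μ)
    (hlaw : ∀ i, lawStale p q μ (X i)) (k n m : ℕ) (hm : 1 ≤ m) :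
    μ (Bev X k n m) = (ENNReal.ofReal (1 - (1 - p + q) / 4)) ^ (m - 1) *
      ENNReal.ofReal ((1 - p + q) / 4) := by
  have hBeq : Bev X k n m =
      {ω | ∀ i : ℤ, (n : ℤ) < i → i < (n : ℤ) + m → X i ω ∉ Csucc k} ∩
        X ((n : ℤ) + m) ⁻¹' Csucc k := rfl
  have hsplit := indep_split hmeas hiid ((n : ℤ) + m - 1)
  rw [hBeq, (Indep_iff _ _ _).mp hsplit _ _ (measurableSet_Bev_mid X k n m hm)
    (measurableSet_coord (show (n : ℤ) + m ∈ Set.Ioi ((n : ℤ) + m - 1) by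
      simp only [Set.mem_Ioi]; omega) _)]
  have hmid : {ω | ∀ i : ℤ, (n : ℤ) < i → i < (n : ℤ) + m → X i ω ∉ Csucc k} =
      ⋂ i ∈ Finset.Ioo (n : ℤ) ((n : ℤ) + m), X i ⁻¹' (Csucc k)ᶜ := by
    ext ω
    simp only [Set.mem_setOf_eq, Set.mem_iInter, Finset.mem_Ioo, Set.mem_preimage,
      Set.mem_compl_iff, and_imp]
  rw [hmid, hiid.meas_biInter (fun i _ => ⟨(Csucc k)ᶜ, trivial, rfl⟩),
    Finset.prod_congr rfl (fun i _ => meas_Csucc_compl hq0 hpq hmeas hlaw i k),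
    Finset.prod_const, Int.card_Ioo, meas_Csucc hq0 hpq hmeas hlaw _ k]
  congr 2
  omega

end MeasAux2
/-- In the all-stale-orders burger model with parameters `p = p_D`,
`q = p_E`, for each `k ∈ ℕ` the law of `ι k − ι (k−1)` is geometric with success probability
`(1 − p + q)/4`: it equals `m ≥ 1` with probability `(1 - s)^(m-1) * s` where `s = (1-p+q)/4`. -/
theorem iota_increment_geometric {Ω : Type*} [MeasurableSpace Ω]
    (μ : Measure Ω) [IsProbabilityMeasure μ]
    (p q : ℝ) (hp0 : 0 ≤ p) (hq0 : 0 ≤ q) (hpq : p + q < 1)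
    (X : ℤ → Ω → BSym) (hmeas : ∀ i, Measurable (X i))
    (hiid : iIndepFun X μ)
    (hlaw : ∀ i, lawStale p q μ (X i)) :
    ∀ k : ℕ, ∀ m : ℕ, 1 ≤ m →
      μ {ω | iota X ω (k + 1) - iota X ω k = m} =
        ENNReal.ofReal ((1 - (1 - p + q) / 4) ^ (m - 1) * ((1 - p + q) / 4)) := by
  intro k m hm
  have hp1 : p < 1 := by linarith
  set s : ℝ := (1 - p + q) / 4 with hsdef
  have hs0 : 0 ≤ s := div_nonneg (by linarith) (by norm_num)
  have h1s0 : 0 ≤ 1 - s := by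
    have : s ≤ 1 := by rw [hsdef, div_le_one (by norm_num)]; linarith
    linarith
  have hGc : μ (Gset X)ᶜ = 0 := Gc_null hp0 hq0 hpq hmeas hiid hlaw
  have hmeasA : ∀ k' n, MeasurableSet (Aev X k' n) :=
    fun k' n => Fle_le X hmeas _ _ (measurableSet_Aev X k' n)
  have hmeasB : ∀ n, MeasurableSet (Bev X k n m) :=
    fun n => Fgt_le X hmeas _ _ (measurableSet_Bev_gt X k n m hm)
  have bridge1 : ∀ n, Aev X k n ∩ Bev X k n m ⊆
      {ω | iota X ω (k + 1) - iota X ω k = m} := by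
    rintro n ω ⟨hA, hB⟩
    have hA' : ω ∈ Aev X (k + 1) (n + m) := by
      refine ⟨n, by omega, hA, ?_, ?_⟩
      · intro i h1 h2
        exact hB.1 i h1 (by push_cast at h2 ⊢; omega)
      · have hcast : ((n + m : ℕ) : ℤ) = (n : ℤ) + m := by push_cast; ring
        rw [hcast]
        exact hB.2
    have e1 := iota_eq_of_mem_Aev X ω k n hA
    have e2 := iota_eq_of_mem_Aev X ω (k + 1) (n + m) hA'
    simp only [Set.mem_setOf_eq, e1, e2]
    omega
  have bridge2 : {ω | iota X ω (k + 1) - iota X ω k = m} ⊆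
      (⋃ n, Aev X k n ∩ Bev X k n m) ∪ (Gset X)ᶜ := by
    intro ω hω
    by_cases hG : ω ∈ Gset X
    · left
      obtain ⟨n, hA⟩ := exists_mem_Aev hG k
      obtain ⟨n', hA'⟩ := exists_mem_Aev hG (k + 1)
      have e1 := iota_eq_of_mem_Aev X ω k n hA
      have e2 := iota_eq_of_mem_Aev X ω (k + 1) n' hA'
      simp only [Set.mem_setOf_eq, e1, e2] at hω
      obtain ⟨j, hjn', hAj, hmid, hend⟩ := hA'
      have hj : j = n := Aev_eq_iff hAj hA
      have hn' : n' = j + m := by omega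
      refine Set.mem_iUnion.mpr ⟨j, hAj, ?_, ?_⟩
      · intro i h1 h2
        refine hmid i h1 ?_
        rw [hn'] at *
        push_cast at h2 ⊢
        omega
      · have hcast : (j : ℤ) + m = ((n' : ℕ) : ℤ) := by rw [hn']; push_cast; ring
        rw [hcast]
        exact hend
    · exact Or.inr hG
  have hdisj : Pairwise (Function.onFun Disjoint fun n => Aev X k n ∩ Bev X k n m) := by
    intro a b hab
    refine Set.disjoint_left.mpr ?_
    rintro ω ⟨ha, -⟩ ⟨hb, -⟩
    exact hab (Aev_eq_iff ha hb)
  have hdisjA : Pairwise (Function.onFun Disjoint fun n => Aev X k n) := fun a b hab =>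
    Set.disjoint_left.mpr fun ω ha hb => hab (Aev_eq_iff ha hb)
  have hsumA : ∑' n, μ (Aev X k n) = 1 := by
    rw [← measure_iUnion hdisjA fun n => hmeasA k n]
    refine le_antisymm prob_le_one ?_
    calc (1 : ℝ≥0∞) = μ Set.univ := measure_univ.symm
      _ ≤ μ ((⋃ n, Aev X k n) ∪ (Gset X)ᶜ) := by
          refine measure_mono fun ω _ => ?_
          by_cases hG : ω ∈ Gset X
          · exact Or.inl (Set.mem_iUnion.mpr (exists_mem_Aev hG k))
          · exact Or.inr hG
      _ ≤ μ (⋃ n, Aev X k n) + μ (Gset X)ᶜ := measure_union_le _ _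
      _ = μ (⋃ n, Aev X k n) := by rw [hGc, add_zero]
  have hprod : ∀ n, μ (Aev X k n ∩ Bev X k n m) =
      μ (Aev X k n) * ((ENNReal.ofReal (1 - s)) ^ (m - 1) * ENNReal.ofReal s) := by
    intro n
    rw [(Indep_iff _ _ _).mp (indep_split hmeas hiid (n : ℤ)) _ _
      (measurableSet_Aev X k n) (measurableSet_Bev_gt X k n m hm),
      meas_Bev hq0 hpq hmeas hiid hlaw k n m hm]
  have hEq : μ {ω | iota X ω (k + 1) - iota X ω k = m} =
      μ (⋃ n, Aev X k n ∩ Bev X k n m) := by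
    refine le_antisymm ?_ (measure_mono (Set.iUnion_subset bridge1))
    calc μ {ω | iota X ω (k + 1) - iota X ω k = m}
        ≤ μ ((⋃ n, Aev X k n ∩ Bev X k n m) ∪ (Gset X)ᶜ) := measure_mono bridge2
      _ ≤ μ (⋃ n, Aev X k n ∩ Bev X k n m) + μ (Gset X)ᶜ := measure_union_le _ _
      _ = μ (⋃ n, Aev X k n ∩ Bev X k n m) := by rw [hGc, add_zero]
  rw [hEq, measure_iUnion hdisj fun n => (hmeasA k n).inter (hmeasB n)]
  calc ∑' n, μ (Aev X k n ∩ Bev X k n m)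
      = ∑' n, μ (Aev X k n) * ((ENNReal.ofReal (1 - s)) ^ (m - 1) * ENNReal.ofReal s) :=
        tsum_congr fun n => hprod n
    _ = (∑' n, μ (Aev X k n)) * ((ENNReal.ofReal (1 - s)) ^ (m - 1) * ENNReal.ofReal s) :=
        ENNReal.tsum_mul_right
    _ = ENNReal.ofReal ((1 - s) ^ (m - 1) * s) := by
        rw [hsumA, one_mul, ← ENNReal.ofReal_pow h1s0,
          ← ENNReal.ofReal_mul (pow_nonneg h1s0 _)]
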